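/- Let t ≥ 2, Δ1 ≥ 0 and Δ2 ≥ 0 be integers and 0 < ε < 1/2 a real number. Let G1 and G2 be simple graphs on the same finite vertex set of size n that do not pack, such that the edge {u,v} is the unique edge belonging to both G1 and G2 (i.e., E(G1) ∩ E(G2) = {{u,v}}), the maximum codegree of G1 satisfies Δ^∧(G1) < t, Δ(G1) ≤ Δ1, Δ(G2) ≤ Δ2, and |N2(x) ∩ N2(y)| ≥ (1−ε)·Δ2 for every edge xy of G2. Then |N2(N1(u))| ≤ ((1+ε)/2)·Δ1·Δ2 + ((1−ε)/2)·(t−1)·Δ2² + ((3−ε)/2)·Δ2. -/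

import Mathlib

/-!
Let `S = N₁(u)`. Counting edges of `G₂` between `S` and `N₂(S)`, every vertex of `N₂(S)` is hit
at least twice except the private neighbours `P` (those with a single `G₂`-neighbour in `S`), so
`2 |N₂(S)| ≤ |P| + |S| Δ₂`. A vertex `x ∈ S` with a `G₂`-neighbour `y ∈ S` sees at most `ε Δ₂`
private neighbours, since its `(1 - ε) Δ₂` common neighbours with `y` are not private. The vertices
of `S` isolated in `G₂[S]` are few: if such an `x ≠ v` had no `G₁`-neighbour in `N₂(u)`, swapping
`u` and `x` would pack `G₁` and `G₂`. So each such `x` lies in `N₁(w) ∩ N₁(u)` for some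
`w ∈ N₂(u)`, and codegrees below `t` leave at most `Δ₂ (t - 1) + 1` isolated vertices.
-/

open SimpleGraph Finset

namespace SimpleGraph

variable {V : Type*} [DecidableEq V]

def Packs (G H : SimpleGraph V) : Prop :=
  ∃ σ : Equiv.Perm V, ∀ x y, H.Adj x y → ¬ G.Adj (σ x) (σ y)

section Swap

variable {G H : SimpleGraph V} {u v x : V}

theorem exists_adj_of_not_packs (hnp : ¬ G.Packs H) (huv : G.edgeSet ∩ H.edgeSet ⊆ {s(u, v)})
    (hux : G.Adj u x) (hxv : x ≠ v) (hx : ∀ y, H.Adj x y → ¬ G.Adj u y) :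
    ∃ w, H.Adj u w ∧ G.Adj x w := by
  have common : ∀ a b, G.Adj a b → H.Adj a b → s(a, b) = s(u, v) :=
    fun a b hG hH => huv ⟨hG, hH⟩
  have not_ux : ¬ H.Adj u x := fun h => by
    rcases Sym2.eq_iff.mp (common u x hux h) with ⟨-, h⟩ | ⟨-, h⟩
    exacts [hxv h, hux.ne' h]
  by_contra! hw
  refine hnp ⟨Equiv.swap u x, fun a b hab hG => ?_⟩
  wlog ha : a = u ∨ a = x generalizing a b
  · by_cases hb : b = u ∨ b = x
    · exact this b a hab.symm hG.symm hb
    push Not at ha hb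
    rw [Equiv.swap_apply_of_ne_of_ne ha.1 ha.2, Equiv.swap_apply_of_ne_of_ne hb.1 hb.2] at hG
    rcases Sym2.eq_iff.mp (common a b hG hab) with ⟨h, -⟩ | ⟨-, h⟩
    exacts [ha.1 h, hb.1 h]
  rcases ha with rfl | rfl
  · have hbx : b ≠ x := by rintro rfl; exact not_ux hab
    rw [Equiv.swap_apply_left, Equiv.swap_apply_of_ne_of_ne hab.ne' hbx] at hG
    exact hw b hab hG
  · have hbu : b ≠ u := by rintro rfl; exact not_ux hab.symm
    rw [Equiv.swap_apply_right, Equiv.swap_apply_of_ne_of_ne hbu hab.ne'] at hG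
    exact hx b hab hG

end Swap

variable [Fintype V] (H : SimpleGraph V) [DecidableRel H.Adj]

def isolatedIn (S : Finset V) : Finset V :=
  {x ∈ S | Disjoint (H.neighborFinset x) S}

def privateNeighbors (S : Finset V) : Finset V :=
  {w ∈ S.biUnion fun x => H.neighborFinset x | #(H.neighborFinset w ∩ S) = 1}

theorem card_isolatedIn_neighborFinset_le {G : SimpleGraph V} [DecidableRel G.Adj] {u v : V}
    {k : ℕ} (hnp : ¬ G.Packs H) (huv : G.edgeSet ∩ H.edgeSet ⊆ {s(u, v)})
    (hcodeg : ∀ w, w ≠ u → #(G.neighborFinset w ∩ G.neighborFinset u) ≤ k) :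
    #(H.isolatedIn (G.neighborFinset u)) ≤ H.degree u * k + 1 := by
  set S := G.neighborFinset u
  have hsub : H.isolatedIn S ⊆
      insert v ((H.neighborFinset u).biUnion fun w => G.neighborFinset w ∩ S) := by
    intro x hx
    obtain ⟨hxS, hdisj⟩ := mem_filter.mp hx
    rw [mem_insert, mem_biUnion]
    refine or_iff_not_imp_left.mpr fun hxv => ?_
    obtain ⟨w, huw, hxw⟩ := exists_adj_of_not_packs hnp huv ((G.mem_neighborFinset _ _).mp hxS)
      hxv fun y hxy huy => Finset.disjoint_left.mp hdisj
        ((H.mem_neighborFinset _ _).mpr hxy) ((G.mem_neighborFinset _ _).mpr huy)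
    exact ⟨w, (H.mem_neighborFinset _ _).mpr huw,
      mem_inter.mpr ⟨(G.mem_neighborFinset _ _).mpr hxw.symm, hxS⟩⟩
  calc #(H.isolatedIn S)
      ≤ #((H.neighborFinset u).biUnion fun w => G.neighborFinset w ∩ S) + 1 :=
        (card_le_card hsub).trans (card_insert_le _ _)
    _ ≤ ∑ w ∈ H.neighborFinset u, #(G.neighborFinset w ∩ S) + 1 := by
        gcongr; exact card_biUnion_le
    _ ≤ H.degree u * k + 1 := by
        gcongr
        rw [← card_neighborFinset_eq_degree, ← smul_eq_mul]
        exact sum_le_card_nsmul _ _ _ fun w hw =>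
          hcodeg w ((H.mem_neighborFinset _ _).mp hw).ne'

theorem two_mul_card_biUnion_neighborFinset_le (S : Finset V) :
    2 * #(S.biUnion fun x => H.neighborFinset x)
      ≤ #(H.privateNeighbors S) + ∑ x ∈ S, H.degree x := by
  set U := S.biUnion fun x => H.neighborFinset x
  have double_count : ∑ w ∈ U, #(H.neighborFinset w ∩ S) = ∑ x ∈ S, H.degree x := by
    calc ∑ w ∈ U, #(H.neighborFinset w ∩ S)
        = ∑ w ∈ U, #(S.bipartiteBelow H.Adj w) := by
          refine sum_congr rfl fun w _ => congr_arg card ?_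
          ext x
          simp [bipartiteBelow, adj_comm, and_comm]
      _ = ∑ x ∈ S, #(U.bipartiteAbove H.Adj x) :=
          (sum_card_bipartiteAbove_eq_sum_card_bipartiteBelow _).symm
      _ = ∑ x ∈ S, H.degree x := by
          refine sum_congr rfl fun x hx => ?_
          rw [← card_neighborFinset_eq_degree]
          congr 1
          ext w
          simpa [bipartiteAbove, U] using fun hxw => ⟨x, hx, hxw⟩
  calc 2 * #U = ∑ w ∈ U, 2 := by rw [sum_const, smul_eq_mul, mul_comm]
    _ ≤ ∑ w ∈ U,
          ((if #(H.neighborFinset w ∩ S) = 1 then 1 else 0) + #(H.neighborFinset w ∩ S)) := by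
        refine sum_le_sum fun w hw => ?_
        obtain ⟨x, hx, hxw⟩ := mem_biUnion.mp hw
        have : 0 < #(H.neighborFinset w ∩ S) :=
          card_pos.mpr ⟨x, mem_inter.mpr ⟨(H.mem_neighborFinset _ _).mpr
            ((H.mem_neighborFinset _ _).mp hxw).symm, hx⟩⟩
        split_ifs <;> omega
    _ = #(H.privateNeighbors S) + ∑ x ∈ S, H.degree x := by
        rw [sum_add_distrib, double_count, privateNeighbors, card_filter]

theorem card_inter_privateNeighbors_add_card_inter_le {S : Finset V} {x y : V} (hx : x ∈ S)
    (hy : y ∈ S) (hxy : H.Adj x y) :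
    #(H.neighborFinset x ∩ H.privateNeighbors S)
      + #(H.neighborFinset x ∩ H.neighborFinset y) ≤ H.degree x := by
  have hdisj : Disjoint (H.neighborFinset x ∩ H.privateNeighbors S)
      (H.neighborFinset x ∩ H.neighborFinset y) := by
    refine Finset.disjoint_left.mpr fun w hwP hwxy => ?_
    obtain ⟨a, ha⟩ := card_eq_one.mp (mem_filter.mp (mem_inter.mp hwP).2).2
    have eq_a : ∀ z ∈ S, H.Adj z w → z = a := fun z hz hzw => by
      rw [← mem_singleton, ← ha, mem_inter, mem_neighborFinset]
      exact ⟨hzw.symm, hz⟩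
    simp only [mem_inter, mem_neighborFinset] at hwxy
    exact hxy.ne ((eq_a x hx hwxy.1).trans (eq_a y hy hwxy.2).symm)
  rw [← card_union_of_disjoint hdisj, ← card_neighborFinset_eq_degree]
  exact card_le_card (union_subset inter_subset_left inter_subset_left)

theorem card_privateNeighbors_le {Δ : ℕ} {ε : ℝ} (hΔ : H.maxDegree ≤ Δ)
    (hcodeg : ∀ x y, H.Adj x y →
      (1 - ε) * Δ ≤ (#(H.neighborFinset x ∩ H.neighborFinset y) : ℝ))
    (S : Finset V) :
    (#(H.privateNeighbors S) : ℝ)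
      ≤ #(H.isolatedIn S) * Δ + (#S - #(H.isolatedIn S)) * (ε * Δ) := by
  set P := H.privateNeighbors S
  have hdeg : ∀ x, (H.degree x : ℝ) ≤ Δ := fun x => by
    exact_mod_cast (H.degree_le_maxDegree x).trans hΔ
  have hcover : P ⊆ S.biUnion fun x => H.neighborFinset x ∩ P := by
    intro w hw
    obtain ⟨x, hx, hxw⟩ := mem_biUnion.mp (mem_filter.mp hw).1
    exact mem_biUnion.mpr ⟨x, hx, mem_inter.mpr ⟨hxw, hw⟩⟩
  have isolated : ∀ x ∈ H.isolatedIn S, (#(H.neighborFinset x ∩ P) : ℝ) ≤ Δ := fun x _ => by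
    refine le_trans ?_ (hdeg x)
    rw [← card_neighborFinset_eq_degree]
    exact_mod_cast card_le_card inter_subset_left
  have nonisolated : ∀ x ∈ {x ∈ S | ¬ Disjoint (H.neighborFinset x) S},
      (#(H.neighborFinset x ∩ P) : ℝ) ≤ ε * Δ := by
    intro x hx
    obtain ⟨hxS, hx⟩ := mem_filter.mp hx
    obtain ⟨y, hy, hyS⟩ := Finset.not_disjoint_iff.mp hx
    have hxy := (H.mem_neighborFinset _ _).mp hy
    have hsplit : (#(H.neighborFinset x ∩ P) : ℝ) + #(H.neighborFinset x ∩ H.neighborFinset y)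
        ≤ H.degree x := by
      exact_mod_cast H.card_inter_privateNeighbors_add_card_inter_le hxS hyS hxy
    linarith [hcodeg x y hxy, hdeg x]
  have hcard :
      (#{x ∈ S | ¬ Disjoint (H.neighborFinset x) S} : ℝ) = #S - #(H.isolatedIn S) := by
    rw [eq_sub_iff_add_eq', isolatedIn]
    exact_mod_cast card_filter_add_card_filter_not _
  calc (#P : ℝ) ≤ ∑ x ∈ S, (#(H.neighborFinset x ∩ P) : ℝ) := by
        exact_mod_cast (card_le_card hcover).trans card_biUnion_le
    _ = ∑ x ∈ H.isolatedIn S, (#(H.neighborFinset x ∩ P) : ℝ)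
        + ∑ x ∈ S with ¬ Disjoint (H.neighborFinset x) S, (#(H.neighborFinset x ∩ P) : ℝ) :=
        (sum_filter_add_sum_filter_not _ _ _).symm
    _ ≤ #(H.isolatedIn S) * Δ + (#S - #(H.isolatedIn S)) * (ε * Δ) := by
        rw [← hcard, ← nsmul_eq_mul, ← nsmul_eq_mul]
        exact add_le_add (sum_le_card_nsmul _ _ _ isolated) (sum_le_card_nsmul _ _ _ nonisolated)

end SimpleGraph

theorem stmt_19_general {V : Type*} [Fintype V] [DecidableEq V]
    (G1 G2 : SimpleGraph V) [DecidableRel G1.Adj] [DecidableRel G2.Adj]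
    (t Δ1 Δ2 : ℕ) (ε : ℝ) (ht : 2 ≤ t) (hε0 : 0 < ε) (hε1 : ε < 1 / 2)
    (hnopack : ¬ ∃ σ : Equiv.Perm V, ∀ x y : V, G2.Adj x y → ¬ G1.Adj (σ x) (σ y))
    (u v : V) (huv : G1.edgeSet ∩ G2.edgeSet = {s(u, v)})
    (hcodeg : ∀ x y : V, x ≠ y →
      (G1.neighborFinset x ∩ G1.neighborFinset y).card < t)
    (hΔ1 : G1.maxDegree ≤ Δ1) (hΔ2 : G2.maxDegree ≤ Δ2)
    (hadjcodeg : ∀ x y : V, G2.Adj x y →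
      ((G2.neighborFinset x ∩ G2.neighborFinset y).card : ℝ) ≥ (1 - ε) * (Δ2 : ℝ)) :
    ((((G1.neighborFinset u).biUnion fun x => G2.neighborFinset x).card : ℝ))
      ≤ (1 + ε) / 2 * (Δ1 : ℝ) * (Δ2 : ℝ)
        + (1 - ε) / 2 * ((t : ℝ) - 1) * (Δ2 : ℝ) ^ 2
        + (3 - ε) / 2 * (Δ2 : ℝ) := by
  set S := G1.neighborFinset u
  have hdeg2 : ∀ x, G2.degree x ≤ Δ2 := fun x => (G2.degree_le_maxDegree x).trans hΔ2
  have hS : (#S : ℝ) ≤ Δ1 := by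
    rw [card_neighborFinset_eq_degree]
    exact_mod_cast (G1.degree_le_maxDegree u).trans hΔ1
  have hI : (#(G2.isolatedIn S) : ℝ) ≤ Δ2 * (t - 1) + 1 := by
    have hiso := G2.card_isolatedIn_neighborFinset_le hnopack huv.subset
      fun w hw => Nat.le_sub_one_of_lt (hcodeg w u hw)
    have h : #(G2.isolatedIn S) ≤ Δ2 * (t - 1) + 1 := hiso.trans (by gcongr; exact hdeg2 u)
    rw [← Nat.cast_one, ← Nat.cast_sub (by omega)]
    exact_mod_cast h
  have hU : 2 * (#(S.biUnion fun x => G2.neighborFinset x) : ℝ)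
      ≤ #(G2.privateNeighbors S) + #S * Δ2 := by
    have hsum : ∑ x ∈ S, G2.degree x ≤ #S * Δ2 := by
      rw [← smul_eq_mul]; exact sum_le_card_nsmul _ _ _ fun x _ => hdeg2 x
    exact_mod_cast (G2.two_mul_card_biUnion_neighborFinset_le S).trans (by omega)
  have hP := G2.card_privateNeighbors_le hΔ2 hadjcodeg S
  have hΔ2_nonneg : (0 : ℝ) ≤ Δ2 := Nat.cast_nonneg _
  linarith [mul_nonneg (mul_nonneg (sub_nonneg.mpr hS) hΔ2_nonneg) (by linarith : (0 : ℝ) ≤ 1 + ε),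
    mul_nonneg (mul_nonneg (sub_nonneg.mpr hI) hΔ2_nonneg) (by linarith : (0 : ℝ) ≤ 1 - ε)]

theorem stmt_19 {V : Type*} [Fintype V] [DecidableEq V]
    (G1 G2 : SimpleGraph V) [DecidableRel G1.Adj] [DecidableRel G2.Adj]
    (n t Δ1 Δ2 : ℕ) (ε : ℝ) (ht : 2 ≤ t) (hε0 : 0 < ε) (hε1 : ε < 1 / 2)
    (hn : Fintype.card V = n)
    (hnopack : ¬ ∃ σ : Equiv.Perm V, ∀ x y : V, G2.Adj x y → ¬ G1.Adj (σ x) (σ y))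
    (u v : V) (huv : G1.edgeSet ∩ G2.edgeSet = {s(u, v)})
    (hcodeg : ∀ x y : V, x ≠ y →
      (G1.neighborFinset x ∩ G1.neighborFinset y).card < t)
    (hΔ1 : G1.maxDegree ≤ Δ1) (hΔ2 : G2.maxDegree ≤ Δ2)
    (hadjcodeg : ∀ x y : V, G2.Adj x y →
      ((G2.neighborFinset x ∩ G2.neighborFinset y).card : ℝ) ≥ (1 - ε) * (Δ2 : ℝ)) :
    ((((G1.neighborFinset u).biUnion fun x => G2.neighborFinset x).card : ℝ))
      ≤ (1 + ε) / 2 * (Δ1 : ℝ) * (Δ2 : ℝ)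
        + (1 - ε) / 2 * ((t : ℝ) - 1) * (Δ2 : ℝ) ^ 2
        + (3 - ε) / 2 * (Δ2 : ℝ) :=
  stmt_19_general G1 G2 t Δ1 Δ2 ε ht hε0 hε1 hnopack u v huv hcodeg hΔ1 hΔ2 hadjcodeg
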